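/- arXiv:1901.05395 — 3 statements merged into one kernel-verified Lean document; each statement's English description precedes it below -/
import Mathlib

section
/- Fix integers n ≥ 1 and 0 ≤ j ≤ n. In the complex vector space with basis e₁, …, e_n, the set of vectors {e_k : 1 ≤ k ≤ j} ∪ {e_{k-1} + e_{k+1} : j < k ≤ n} (with the convention e₀ = e_{n+1} = 0) spans the whole space if and only if n − j is even. -/
/-!
Write `S` for the span. Every `e_k` with `k ≤ j` lies in `S`, and for `j < k ≤ n` the generator
`e_{k-1} + e_{k+1}` shows `e_{k-1} ∈ S ↔ e_{k+1} ∈ S`. Walking up from `e_j` in steps of two reaches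
every `e_k` with `k - j` even; walking down from `e_{n+1} = 0` reaches every `e_k` with `n + 1 - k`
even. If `n - j` is even these two chains cover all of `e_{j+1}, …, e_n`.

If `n - j` is odd, the functional `x ↦ ∑ c_k x_k` with `c_k = 0` for `k ≤ j` and
`c_{j+1}, c_{j+2}, … = 1, 0, -1, 0, 1, …` kills every generator: `c_{k-1} + c_{k+1} = 0` for `k > j`,
and the missing term `c_{n+1}` at the top is `0` because `n + 1 - (j + 1)` is odd.
It does not kill `e_{j+1}`, so `S ≠ ⊤`.
-/

open Submodule

variable (R : Type*) [CommRing R]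

/-- Indexed from `1` as in the paper, so that `unitVec R n 0 = 0` and `unitVec R n (n + 1) = 0`. -/
def unitVec (n k : ℕ) : Fin n → R := fun a => if (a : ℕ) + 1 = k then 1 else 0

def chainVec (n j k : ℕ) : Fin n → R :=
  if k ≤ j then unitVec R n k else unitVec R n (k - 1) + unitVec R n (k + 1)

def chainSpan (n j : ℕ) : Submodule R (Fin n → R) :=
  span R (Set.range fun i : Fin n => chainVec R n j (i + 1))

variable {R} {n j k : ℕ}

lemma unitVec_zero : unitVec R n 0 = 0 := by
  ext a; simp [unitVec]

lemma unitVec_of_lt (h : n < k) : unitVec R n k = 0 := by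
  ext a; simp [unitVec]; omega

lemma unitVec_succ (a : Fin n) : unitVec R n (a + 1) = Pi.single a 1 := by
  ext b; simp [unitVec, Pi.single_apply, Fin.ext_iff]

lemma chainVec_mem (h1 : 1 ≤ k) (h2 : k ≤ n) : chainVec R n j k ∈ chainSpan R n j := by
  obtain ⟨a, rfl⟩ : ∃ a : Fin n, k = a + 1 := ⟨⟨k - 1, by omega⟩, by simp; omega⟩
  exact subset_span ⟨a, rfl⟩

lemma unitVec_mem_of_le (h : k ≤ j) : unitVec R n k ∈ chainSpan R n j := by
  rcases Nat.eq_zero_or_pos k with rfl | hk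
  · simp [unitVec_zero]
  rcases le_or_gt k n with hkn | hkn
  · simpa [chainVec, h] using chainVec_mem (R := R) (j := j) hk hkn
  · simp [unitVec_of_lt hkn]

lemma unitVec_succ_mem_iff (hk : j < k) (hkn : k ≤ n) :
    unitVec R n (k + 1) ∈ chainSpan R n j ↔ unitVec R n (k - 1) ∈ chainSpan R n j := by
  have := chainVec_mem (R := R) (j := j) (by omega : 1 ≤ k) hkn
  rw [chainVec, if_neg (by omega)] at this
  exact ⟨fun h => by simpa using sub_mem this h, fun h => by simpa using sub_mem this h⟩

lemma unitVec_add_two_mul_mem (m : ℕ) (h : j + 2 * m ≤ n) :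
    unitVec R n (j + 2 * m) ∈ chainSpan R n j := by
  induction m with
  | zero => exact unitVec_mem_of_le le_rfl
  | succ m ih =>
    rw [show j + 2 * (m + 1) = j + 2 * m + 1 + 1 by ring,
      unitVec_succ_mem_iff (by omega) (by omega)]
    exact ih (by omega)

lemma unitVec_sub_two_mul_mem (m : ℕ) (h : j + 2 * m ≤ n) :
    unitVec R n (n + 1 - 2 * m) ∈ chainSpan R n j := by
  induction m with
  | zero => simp [unitVec_of_lt]
  | succ m ih =>
    rw [show n + 1 - 2 * (m + 1) = n - 2 * m - 1 by omega,
      ← unitVec_succ_mem_iff (by omega : j < n - 2 * m) (by omega),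
      show n - 2 * m + 1 = n + 1 - 2 * m by omega]
    exact ih (by omega)

lemma chainSpan_eq_top_of_even (h : Even (n - j)) : chainSpan R n j = ⊤ := by
  rw [eq_top_iff, ← (Pi.basisFun R (Fin n)).span_eq, span_le]
  rintro _ ⟨a, rfl⟩
  rw [SetLike.mem_coe, Pi.basisFun_apply, ← unitVec_succ]
  have := a.isLt
  obtain ⟨l, hl⟩ := h
  rcases le_or_gt ((a : ℕ) + 1) j with ha | ha
  · exact unitVec_mem_of_le ha
  obtain ⟨m, hm | hm⟩ := Nat.even_or_odd' ((a : ℕ) + 1 - j)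
  · rw [show (a : ℕ) + 1 = j + 2 * m by omega]
    exact unitVec_add_two_mul_mem m (by omega)
  · rw [show (a : ℕ) + 1 = n + 1 - 2 * (l - m) by omega]
    exact unitVec_sub_two_mul_mem (l - m) (by omega)

variable (R) in
def altSeq : ℕ → R
  | 0 => 1
  | 1 => 0
  | m + 2 => -altSeq m

lemma altSeq_add_two_add_self (m : ℕ) : altSeq R (m + 2) + altSeq R m = 0 := by
  simp [altSeq]

lemma altSeq_odd : ∀ m : ℕ, altSeq R (2 * m + 1) = 0
  | 0 => rfl
  | m + 1 => by simp [altSeq, mul_add, altSeq_odd m]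

variable (R) in
def chainCoeff (j k : ℕ) : R := if j < k then altSeq R (k - (j + 1)) else 0

lemma chainCoeff_pred_add_succ (hk : j < k) :
    chainCoeff R j (k - 1) + chainCoeff R j (k + 1) = 0 := by
  rcases Nat.lt_or_eq_of_le hk with hk | rfl
  · rw [chainCoeff, chainCoeff, if_pos (by omega), if_pos (by omega), add_comm,
      show k + 1 - (j + 1) = k - 1 - (j + 1) + 2 by omega, altSeq_add_two_add_self]
  · simp [chainCoeff, altSeq]

variable (R) in
def chainFunctional (n j : ℕ) : (Fin n → R) →ₗ[R] R :=
  Fintype.linearCombination R fun a : Fin n => chainCoeff R j (a + 1)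

lemma chainFunctional_unitVec (hodd : Odd (n - j)) (hk : k ≤ n + 1) :
    chainFunctional R n j (unitVec R n k) = chainCoeff R j k := by
  rcases Nat.eq_zero_or_pos k with rfl | hk0
  · simp [unitVec_zero, chainCoeff]
  rcases Nat.lt_or_eq_of_le hk with hk | rfl
  · obtain ⟨a, rfl⟩ : ∃ a : Fin n, k = a + 1 := ⟨⟨k - 1, by omega⟩, by simp; omega⟩
    simp [chainFunctional, unitVec_succ, Fintype.linearCombination_apply_single]
  · obtain ⟨m, hm⟩ := hodd
    rw [unitVec_of_lt (by omega), map_zero, chainCoeff, if_pos (by omega),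
      show n + 1 - (j + 1) = 2 * m + 1 by omega, altSeq_odd]

lemma chainSpan_le_ker (hodd : Odd (n - j)) :
    chainSpan R n j ≤ LinearMap.ker (chainFunctional R n j) := by
  rw [chainSpan, span_le]
  rintro _ ⟨a, rfl⟩
  have := a.isLt
  dsimp only
  rw [SetLike.mem_coe, LinearMap.mem_ker, chainVec]
  split_ifs
  · rw [chainFunctional_unitVec hodd (by omega), chainCoeff, if_neg (by omega)]
  · rw [map_add, chainFunctional_unitVec hodd (by omega), chainFunctional_unitVec hodd (by omega),
      chainCoeff_pred_add_succ (by omega)]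

lemma chainSpan_ne_top_of_odd [Nontrivial R] (hodd : Odd (n - j)) : chainSpan R n j ≠ ⊤ := by
  intro htop
  have hmem := chainSpan_le_ker hodd (htop ▸ mem_top : unitVec R n (j + 1) ∈ chainSpan R n j)
  obtain ⟨m, hm⟩ := hodd
  rw [LinearMap.mem_ker, chainFunctional_unitVec ⟨m, hm⟩ (by omega), chainCoeff,
    if_pos (by omega), Nat.sub_self] at hmem
  exact one_ne_zero hmem

theorem chainSpan_eq_top_iff [Nontrivial R] : chainSpan R n j = ⊤ ↔ Even (n - j) :=
  ⟨fun h => Nat.not_odd_iff_even.1 fun hodd => chainSpan_ne_top_of_odd hodd h,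
    chainSpan_eq_top_of_even⟩

/-- In `ℂⁿ` with standard basis `e₁,…,e_n`, the collection
`{e_k : 1 ≤ k ≤ j} ∪ {e_{k-1} + e_{k+1} : j < k ≤ n}` (with `e₀ = e_{n+1} = 0`)
spans the whole space iff `n - j` is even.  (Indices here are 0-based: the
vector attached to `i : Fin n` is `e_i` for `i < j`, and `e_{i-1} + e_{i+1}`
otherwise.) -/
theorem stmt1 (n j : ℕ) :
    Submodule.span ℂ (Set.range (fun i : Fin n =>
      if (i : ℕ) < j then (Pi.single i 1 : Fin n → ℂ)
      else
        (if h0 : (i : ℕ) = 0 then (0 : Fin n → ℂ)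
          else (Pi.single (⟨(i : ℕ) - 1, by have := i.isLt; omega⟩ : Fin n) 1 : Fin n → ℂ))
        + (if hl : (i : ℕ) = n - 1 then (0 : Fin n → ℂ)
          else (Pi.single (⟨(i : ℕ) + 1, by have := i.isLt; omega⟩ : Fin n) 1 : Fin n → ℂ)))) = ⊤
    ↔ Even (n - j) := by
  rw [← chainSpan_eq_top_iff (R := ℂ), chainSpan]
  congr! 3
  funext i a
  simp only [chainVec]
  split_ifs <;> simp only [unitVec, Pi.single_apply, Fin.ext_iff, Pi.add_apply, Pi.zero_apply] <;>
    split_ifs <;> first | omega | simp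
end

section
/- Let M be a finite-dimensional module over a finite-dimensional algebra such that M is multiplicity-free (each simple occurs at most once as a composition factor) and self-dual, and each of its composition factors is self-dual. Then M is semisimple. -/
/-!
Write `T^⊥` for the left orthogonal of a submodule `T` under the contravariant form `β`.
If `T` carries a nondegenerate contravariant form of its own, then `m ↦ (β m)|_T`, read through
that form, identifies `M / T^⊥` with `T` as `A`-modules. Let `S` be the socle of `M`. If
`S^⊥ ≠ 0`, it contains a simple submodule `T ≤ S`, so `T ≤ T^⊥`, and `T` occurs as a
composition factor both as `T / 0` and as `M / T^⊥`, contradicting multiplicity-freeness.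
Hence `S^⊥ = 0`, and nondegeneracy of `β` forces `S = M`.
-/

open Module

theorem LinearMap.SeparatingLeft.bijective {K V : Type*} [Field K] [AddCommGroup V] [Module K V]
    [FiniteDimensional K V] {B : V →ₗ[K] V →ₗ[K] K} (hB : B.SeparatingLeft) :
    Function.Bijective B := by
  have hinj : Function.Injective B :=
    LinearMap.ker_eq_bot.1 (LinearMap.separatingLeft_iff_ker_eq_bot.1 hB)
  exact ⟨hinj, (LinearMap.injective_iff_surjective_of_finrank_eq_finrank
    Subspace.dual_finrank_eq.symm).1 hinj⟩

def Submodule.quotComapTopEquiv {R M : Type*} [Ring R] [AddCommGroup M] [Module R M]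
    (P : Submodule R M) :
    (↥(⊤ : Submodule R M) ⧸ P.comap (⊤ : Submodule R M).subtype) ≃ₗ[R] M ⧸ P :=
  Submodule.Quotient.equiv _ P Submodule.topEquiv (by
    ext x; simp [Submodule.topEquiv])

section Contravariant

variable {A : Type*} [Ring A]

def IsContravariant (σ : A → A) {X Y : Type*} [AddCommGroup X] [Module ℂ X] [Module A X]
    [AddCommGroup Y] [Module ℂ Y] [Module A Y] (B : X →ₗ[ℂ] Y →ₗ[ℂ] ℂ) : Prop :=
  ∀ (a : A) (x : X) (y : Y), B (a • x) y = B x (σ a • y)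

variable {σ : A → A}
variable {M : Type*} [AddCommGroup M] [Module ℂ M] [Module A M]
variable {Z : Type*} [AddCommGroup Z] [Module ℂ Z] [Module A Z]
variable {β : M →ₗ[ℂ] M →ₗ[ℂ] ℂ}

theorem IsContravariant.exists_linearMap_comp_eq [FiniteDimensional ℂ Z]
    {δ : M →ₗ[ℂ] Z →ₗ[ℂ] ℂ} (hδσ : IsContravariant σ δ)
    {γ : Z →ₗ[ℂ] Z →ₗ[ℂ] ℂ} (hγ : γ.SeparatingLeft) (hγσ : IsContravariant σ γ) :
    ∃ f : M →ₗ[A] Z, ∀ m, γ (f m) = δ m := by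
  let e := LinearEquiv.ofBijective γ hγ.bijective
  refine ⟨{ toFun := fun m ↦ e.symm (δ m), map_add' := by simp, map_smul' := fun a m ↦ ?_ },
    fun m ↦ e.apply_symm_apply (δ m)⟩
  refine e.injective (LinearMap.ext fun z ↦ ?_)
  rw [e.apply_symm_apply]
  change δ (a • m) z = γ (a • e.symm (δ m)) z
  rw [hγσ, hδσ]
  exact (LinearMap.congr_fun (e.apply_symm_apply (δ m)) _).symm

def leftOrthogonal (hβ : IsContravariant σ β) (N : Submodule A M) :
    Submodule A M where
  carrier := {m | ∀ n ∈ N, β m n = 0}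
  add_mem' hx hy n hn := by simp [hx n hn, hy n hn]
  zero_mem' n _ := by simp
  smul_mem' a m hm n hn := by
    rw [hβ]; exact hm _ (N.smul_mem _ hn)

theorem leftOrthogonal_antitone (hβ : IsContravariant σ β) :
    Antitone (leftOrthogonal hβ) :=
  fun _ _ hNN' _ hm n hn ↦ hm n (hNN' hn)

theorem eq_top_of_leftOrthogonal_eq_bot [Algebra ℂ A] [IsScalarTower ℂ A M]
    [FiniteDimensional ℂ M]
    (hβ : IsContravariant σ β) (hβnd : β.SeparatingLeft)
    {N : Submodule A M} (hN : leftOrthogonal hβ N = ⊥) : N = ⊤ := by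
  rw [← Submodule.restrictScalars_eq_top_iff ℂ, ← Submodule.dualAnnihilator_eq_bot_iff,
    Submodule.eq_bot_iff]
  intro φ hφ
  obtain ⟨m, rfl⟩ := hβnd.bijective.2 φ
  have hm : m ∈ leftOrthogonal hβ N := (Submodule.mem_dualAnnihilator _).1 hφ
  rw [hN, Submodule.mem_bot] at hm
  rw [hm, map_zero]

theorem nonempty_quotient_leftOrthogonal_equiv [Algebra ℂ A] [IsScalarTower ℂ A M]
    [IsScalarTower ℂ A Z] [FiniteDimensional ℂ M]
    (hβ : IsContravariant σ β) (hβnd : β.SeparatingLeft)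
    {γ : Z →ₗ[ℂ] Z →ₗ[ℂ] ℂ} (hγ : γ.SeparatingLeft) (hγσ : IsContravariant σ γ)
    (T : Submodule A M) (e : Z ≃ₗ[A] T) :
    Nonempty ((M ⧸ leftOrthogonal hβ T) ≃ₗ[A] Z) := by
  let ι : Z →ₗ[ℂ] M := (T.subtype ∘ₗ e.toLinearMap).restrictScalars ℂ
  have hι : Function.Injective ι := T.injective_subtype.comp e.injective
  have : FiniteDimensional ℂ Z := .of_injective ι hι
  let δ : M →ₗ[ℂ] Dual ℂ Z := ι.dualMap ∘ₗ β
  have hδσ : IsContravariant σ δ := fun a m z ↦ by simp [δ, ι, hβ a m]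
  have hδ : Function.Surjective δ :=
    (LinearMap.dualMap_surjective_of_injective hι).comp hβnd.bijective.2
  obtain ⟨f, hf⟩ := hδσ.exists_linearMap_comp_eq hγ hγσ
  have hker : LinearMap.ker f = leftOrthogonal hβ T := by
    ext m
    rw [LinearMap.mem_ker, ← hγ.bijective.1.eq_iff, map_zero, hf]
    constructor
    · intro h n hn
      obtain ⟨z, hz⟩ := e.surjective ⟨n, hn⟩
      simpa [δ, ι, hz] using LinearMap.congr_fun h z
    · intro h
      ext z
      exact h _ (e z).2
  have hsurj : Function.Surjective f := by
    intro z
    obtain ⟨m, hm⟩ := hδ (γ z)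
    exact ⟨m, hγ.bijective.1 ((hf m).trans hm)⟩
  exact ⟨(Submodule.quotEquivOfEq _ _ hker.symm).trans (f.quotKerEquivOfSurjective hsurj)⟩

end Contravariant

theorem stmt7_general (A : Type*) [Ring A] [Algebra ℂ A]
    (M : Type*) [AddCommGroup M] [Module ℂ M] [Module A M] [IsScalarTower ℂ A M]
    [FiniteDimensional ℂ M]
    (σ : A →ₗ[ℂ] A)
    (β : M →ₗ[ℂ] M →ₗ[ℂ] ℂ)
    (hβnd : ∀ m : M, (∀ y : M, β m y = 0) → m = 0)
    (hβ : ∀ (a : A) (m y : M), β (a • m) y = β m (σ a • y))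
    (hMF : ∀ P₁ Q₁ P₂ Q₂ : Submodule A M, P₁ ≤ Q₁ → Q₁ ≤ P₂ → P₂ ≤ Q₂ →
      IsSimpleModule A (↥Q₁ ⧸ P₁.comap Q₁.subtype) →
      IsSimpleModule A (↥Q₂ ⧸ P₂.comap Q₂.subtype) →
      IsEmpty ((↥Q₁ ⧸ P₁.comap Q₁.subtype) ≃ₗ[A] (↥Q₂ ⧸ P₂.comap Q₂.subtype)))
    (hfactors : ∀ P Q : Submodule A M, P ≤ Q →
      IsSimpleModule A (↥Q ⧸ P.comap Q.subtype) →
      ∃ γ : (↥Q ⧸ P.comap Q.subtype) →ₗ[ℂ] (↥Q ⧸ P.comap Q.subtype) →ₗ[ℂ] ℂ,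
        (∀ u, (∀ y, γ u y = 0) → u = 0) ∧
        ∀ (a : A) (u y), γ (a • u) y = γ u (σ a • y)) :
    IsSemisimpleModule A M := by
  have : IsArtinian A M := isArtinian_of_tower ℂ inferInstance
  refine .of_sSup_simples_eq_top (eq_top_of_leftOrthogonal_eq_bot hβ hβnd ?_)
  refine (eq_bot_or_exists_atom_le _).resolve_right ?_
  rintro ⟨T, hT, hT_orth⟩
  have : IsSimpleModule A T := isSimpleModule_iff_isAtom.2 hT
  have hT_isotropic : T ≤ leftOrthogonal hβ T :=
    hT_orth.trans (leftOrthogonal_antitone hβ (le_sSup this))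
  let e₀ := Submodule.quotEquivOfEqBot ((⊥ : Submodule A M).comap T.subtype) (by simp)
  have hT_simple := IsSimpleModule.congr e₀
  obtain ⟨γ, hγ, hγσ⟩ := hfactors ⊥ T bot_le hT_simple
  obtain ⟨e⟩ := nonempty_quotient_leftOrthogonal_equiv hβ hβnd hγ hγσ T e₀
  let e' := (leftOrthogonal hβ T).quotComapTopEquiv.trans e
  exact (hMF ⊥ T _ ⊤ bot_le hT_isotropic le_top hT_simple (.congr e')).false e'.symm

/-- Let `A` be a `ℂ`-algebra with a fixed anti-automorphism
`σ` (defining a duality on finite-dimensional `A`-modules via `σ`-twisted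
duals), and let `M` be a finite-dimensional `A`-module such that:
* `M` is multiplicity-free: no two nested simple subquotients of `M` are
  isomorphic;
* `M` is self-dual: it carries a nondegenerate `σ`-contravariant pairing `β`;
* every simple subquotient (composition factor) of `M` is self-dual in the
  same sense.
Then `M` is semisimple. -/
theorem stmt7 (A : Type*) [Ring A] [Algebra ℂ A]
    (M : Type*) [AddCommGroup M] [Module ℂ M] [Module A M] [IsScalarTower ℂ A M]
    [FiniteDimensional ℂ M]
    (σ : A →ₗ[ℂ] A) (hσmul : ∀ a b : A, σ (a * b) = σ b * σ a) (hσone : σ 1 = 1)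
    (β : M →ₗ[ℂ] M →ₗ[ℂ] ℂ)
    (hβnd : ∀ m : M, (∀ y : M, β m y = 0) → m = 0)
    (hβ : ∀ (a : A) (m y : M), β (a • m) y = β m (σ a • y))
    (hMF : ∀ P₁ Q₁ P₂ Q₂ : Submodule A M, P₁ ≤ Q₁ → Q₁ ≤ P₂ → P₂ ≤ Q₂ →
      IsSimpleModule A (↥Q₁ ⧸ P₁.comap Q₁.subtype) →
      IsSimpleModule A (↥Q₂ ⧸ P₂.comap Q₂.subtype) →
      IsEmpty ((↥Q₁ ⧸ P₁.comap Q₁.subtype) ≃ₗ[A] (↥Q₂ ⧸ P₂.comap Q₂.subtype)))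
    (hfactors : ∀ P Q : Submodule A M, P ≤ Q →
      IsSimpleModule A (↥Q ⧸ P.comap Q.subtype) →
      ∃ γ : (↥Q ⧸ P.comap Q.subtype) →ₗ[ℂ] (↥Q ⧸ P.comap Q.subtype) →ₗ[ℂ] ℂ,
        (∀ u, (∀ y, γ u y = 0) → u = 0) ∧
        ∀ (a : A) (u y), γ (a • u) y = γ u (σ a • y)) :
    IsSemisimpleModule A M :=
  stmt7_general A M σ β hβnd hβ hMF hfactors
end

section
/- Let P(k) for k ≥ 0 denote the big projective module in the block of BGG category O for sl₂(ℂ) containing the simple L(k). Then the weight spaces of P(k) are one-dimensional for weights in {k, k−2, …, −k} ∪ {−k−2, −k−4, …} appropriately, and the composite operator (lowering then raising by 2, i.e. f-then-e suitably normalized, here Ω L_ω) acting on the weight-j space of P(k) is an isomorphism for j ≠ −k and is zero for j = −k. -/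
/-!
Here `X = L_ω` lowers and `Y = Ω` raises weights by 2. A highest weight vector `w₀ ∈ W k`
controls the weights `-k ≤ j ≤ k`: the string `X ^ a w₀` stays nonzero down to weight `-k`, and
`Y X` acts on it by the scalar `(a + 1) (k - a)`, which vanishes only for `a = k`. Below `-k` the
cyclic vector `v` of weight `-k - 2` takes over: the weight space of weight `-k - 2 - 2d` is
spanned by `g c = X ^ (c + d) Y ^ c v`, `c ≤ k + 1`, and `Y X g c = κ c • g c + g (c + 1)` with
`κ c = (c + d + 1) (c - d - k - 2) ≠ 0`. This triangular shape makes `Y X` surjective, hence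
bijective, on that finite-dimensional weight space.
-/

open Submodule Module

section LinearAlgebra

variable {K V : Type*} [Field K] [AddCommGroup V] [Module K V]

theorem Submodule.eq_span_image_of_iSupIndep {ι : Type*} {W : ℤ → Submodule K V}
    (hW : iSupIndep W) (f : ι → V) (wt : ι → ℤ) (hf : ∀ i, f i ∈ W (wt i))
    (hspan : span K (Set.range f) = ⊤) (j : ℤ) :
    W j = span K (f '' {i | wt i = j}) := by
  let P : ℤ → Submodule K V := fun j => span K (f '' {i | wt i = j})
  have hPW : P ≤ W := fun j => span_le.mpr <| by
    rintro _ ⟨i, rfl, rfl⟩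
    exact hf i
  have hP : iSup P = ⊤ := eq_top_iff.mpr <| hspan.ge.trans <| span_le.mpr <| by
    rintro _ ⟨i, rfl⟩
    exact mem_iSup_of_mem (wt i) (subset_span ⟨i, rfl, rfl⟩)
  exact (congrFun ((hW.le_iff_eq_of_iSup_eq_top hP).mp hPW) j).symm

theorem Submodule.exists_smul_eq_of_finrank_eq_one {S : Submodule K V} (hS : finrank K S = 1)
    {x : V} (hx : x ∈ S) (hx0 : x ≠ 0) {w : V} (hw : w ∈ S) : ∃ c : K, c • x = w := by
  obtain ⟨c, hc⟩ := (finrank_eq_one_iff_of_nonzero' (⟨x, hx⟩ : S) (by simpa using hx0)).mp hS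
    ⟨w, hw⟩
  exact ⟨c, congrArg Subtype.val hc⟩

theorem Submodule.le_map_of_forall_eq_smul {S : Submodule K V} {T : V →ₗ[K] V} {c : K}
    (hT : ∀ w ∈ S, T w = c • w) (hc : c ≠ 0) : S ≤ S.map T := fun u hu =>
  ⟨c⁻¹ • u, S.smul_mem _ hu, by rw [hT _ (S.smul_mem _ hu), smul_inv_smul₀ hc]⟩

theorem Submodule.le_map_of_triangular (T : V →ₗ[K] V) (g : ℕ → V) (κ : ℕ → K) {N : ℕ}
    (hN : ∀ n, N ≤ n → g n = 0) (hT : ∀ n < N, T (g n) = κ n • g n + g (n + 1))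
    (hκ : ∀ n < N, κ n ≠ 0) : span K (Set.range g) ≤ (span K (Set.range g)).map T := by
  set S := span K (Set.range g)
  suffices ∀ d n, N ≤ n + d → g n ∈ S.map T by
    refine span_le.mpr ?_
    rintro _ ⟨n, rfl⟩
    exact this N n (by omega)
  intro d
  induction d with
  | zero => exact fun n hn => by simp [hN n hn]
  | succ d ih =>
    intro n hn
    by_cases hNn : N ≤ n
    · simp [hN n hNn]
    have hgn : g n = (κ n)⁻¹ • (T (g n) - g (n + 1)) := by
      rw [hT n (by omega), add_sub_cancel_right, inv_smul_smul₀ (hκ n (by omega))]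
    rw [hgn]
    exact smul_mem _ _ (sub_mem (mem_map_of_mem (subset_span ⟨n, rfl⟩)) (ih (n + 1) (by omega)))

theorem Submodule.injOn_and_surjOn_of_le_map {S : Submodule K V} [FiniteDimensional K S]
    {T : V →ₗ[K] V} (hTS : ∀ w ∈ S, T w ∈ S) (hle : S ≤ S.map T) :
    (∀ w ∈ S, T w = 0 → w = 0) ∧ (∀ u ∈ S, ∃ w ∈ S, T w = u) := by
  have hsurj : Function.Surjective (T.restrict hTS) := by
    rintro ⟨u, hu⟩
    obtain ⟨w, hw, rfl⟩ := hle hu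
    exact ⟨⟨w, hw⟩, rfl⟩
  have hinj := LinearMap.injective_iff_surjective.mpr hsurj
  refine ⟨fun w hw h0 => ?_, fun u hu => hle hu⟩
  have : T.restrict hTS ⟨w, hw⟩ = T.restrict hTS 0 := Subtype.ext (by simpa using h0)
  exact congrArg Subtype.val (hinj this)

end LinearAlgebra

structure IsSl2WeightFamily {K M : Type*} [Field K] [AddCommGroup M] [Module K M]
    (X Y H : Module.End K M) (W : ℤ → Submodule K M) : Prop where
  Y_X_apply : ∀ w, Y (X w) = X (Y w) + H w
  H_apply : ∀ j, ∀ w ∈ W j, H w = (j : K) • w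
  X_mem : ∀ j, ∀ w ∈ W j, X w ∈ W (j - 2)
  Y_mem : ∀ j, ∀ w ∈ W j, Y w ∈ W (j + 2)

namespace IsSl2WeightFamily

variable {K M : Type*} [Field K] [AddCommGroup M] [Module K M]
  {X Y H : Module.End K M} {W : ℤ → Submodule K M}

theorem iSupIndep [CharZero K] (hM : IsSl2WeightFamily X Y H W) : iSupIndep W :=
  (H.eigenspaces_iSupIndep.comp Int.cast_injective).mono fun j _ hw =>
    Module.End.mem_eigenspace_iff.mpr (hM.H_apply j _ hw)

theorem X_pow_mem (hM : IsSl2WeightFamily X Y H W) {j : ℤ} {w : M} (hw : w ∈ W j) (n : ℕ) :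
    (X ^ n) w ∈ W (j - 2 * n) := by
  induction n with
  | zero => simpa using hw
  | succ n ih =>
    rw [pow_succ', Module.End.mul_apply]
    convert hM.X_mem _ _ ih using 2
    push_cast
    ring

theorem Y_pow_mem (hM : IsSl2WeightFamily X Y H W) {j : ℤ} {w : M} (hw : w ∈ W j) (n : ℕ) :
    (Y ^ n) w ∈ W (j + 2 * n) := by
  induction n with
  | zero => simpa using hw
  | succ n ih =>
    rw [pow_succ', Module.End.mul_apply]
    convert hM.Y_mem _ _ ih using 2
    push_cast
    ring

theorem Y_X_mem (hM : IsSl2WeightFamily X Y H W) {j : ℤ} {w : M} (hw : w ∈ W j) :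
    Y (X w) ∈ W j := by
  simpa using hM.Y_mem _ _ (hM.X_mem _ _ hw)

theorem Y_X_pow_succ_apply (hM : IsSl2WeightFamily X Y H W) {j : ℤ} {w : M} (hw : w ∈ W j)
    (n : ℕ) :
    Y ((X ^ (n + 1)) w) = (X ^ (n + 1)) (Y w) + (((n : K) + 1) * (j - n)) • (X ^ n) w := by
  induction n with
  | zero => simp [hM.Y_X_apply, hM.H_apply j w hw]
  | succ n ih =>
    rw [pow_succ' X (n + 1), Module.End.mul_apply, hM.Y_X_apply, ih,
      hM.H_apply _ _ (hM.X_pow_mem hw (n + 1)), map_add, map_smul, ← Module.End.mul_apply,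
      ← pow_succ', ← Module.End.mul_apply X, ← pow_succ']
    push_cast
    module

theorem X_pow_ne_zero [CharZero K] (hM : IsSl2WeightFamily X Y H W) {k : ℕ} {w : M}
    (hw : w ∈ W k) (hY : Y w = 0) (hw0 : w ≠ 0) {n : ℕ} (hn : n ≤ k) : (X ^ n) w ≠ 0 := by
  induction n with
  | zero => simpa using hw0
  | succ n ih =>
    intro h
    have hcoef : ((n : K) + 1) * (((k : ℤ) : K) - n) ≠ 0 :=
      mul_ne_zero (Nat.cast_add_one_ne_zero n) <| sub_ne_zero.mpr <| by
        rw [Int.cast_natCast]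
        exact_mod_cast (by omega : k ≠ n)
    have := hM.Y_X_pow_succ_apply hw n
    rw [h, hY, map_zero, map_zero, zero_add, eq_comm, smul_eq_zero] at this
    exact ih (by omega) (this.resolve_left hcoef)

theorem Y_X_eq_smul_of_finrank_eq_one [CharZero K] (hM : IsSl2WeightFamily X Y H W) {k : ℕ}
    {w₀ : M} (hw₀ : w₀ ∈ W k) (hY : Y w₀ = 0) (hw₀0 : w₀ ≠ 0) {a : ℕ} (ha : a ≤ k)
    (hdim : finrank K (W (k - 2 * a)) = 1) {w : M} (hw : w ∈ W (k - 2 * a)) :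
    Y (X w) = (((a : K) + 1) * (k - a)) • w := by
  obtain ⟨c, rfl⟩ := exists_smul_eq_of_finrank_eq_one hdim (hM.X_pow_mem hw₀ a)
    (hM.X_pow_ne_zero hw₀ hY hw₀0 ha) hw
  rw [map_smul, map_smul, ← Module.End.mul_apply X, ← pow_succ', hM.Y_X_pow_succ_apply hw₀,
    hY, map_zero, zero_add, smul_comm]
  push_cast
  rfl

theorem span_X_pow_Y_pow_eq_top (hM : IsSl2WeightFamily X Y H W) {m : ℤ} {v : M}
    (hv : v ∈ W m) (hgen : ∀ N : Submodule K M, v ∈ N →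
      (∀ u ∈ N, X u ∈ N ∧ Y u ∈ N ∧ H u ∈ N) → N = ⊤) :
    span K (Set.range fun p : ℕ × ℕ => (X ^ p.1) ((Y ^ p.2) v)) = ⊤ := by
  set S := span K (Set.range fun p : ℕ × ℕ => (X ^ p.1) ((Y ^ p.2) v))
  have gen_mem : ∀ a c : ℕ, (X ^ a) ((Y ^ c) v) ∈ S := fun a c => subset_span ⟨(a, c), rfl⟩
  have stable : ∀ f : Module.End K M, (∀ a c : ℕ, f ((X ^ a) ((Y ^ c) v)) ∈ S) →
      ∀ u ∈ S, f u ∈ S := fun f hf u hu =>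
    (map_span_le f _ S).mpr (by rintro _ ⟨⟨a, c⟩, rfl⟩; exact hf a c) (mem_map_of_mem hu)
  refine hgen S (by simpa using gen_mem 0 0) fun u hu => ⟨?_, ?_, ?_⟩
  · refine stable X (fun a c => ?_) u hu
    rw [← Module.End.mul_apply X, ← pow_succ']
    exact gen_mem (a + 1) c
  · refine stable Y (fun a c => ?_) u hu
    rcases a with _ | a
    · simpa only [pow_zero, Module.End.one_apply, pow_succ', Module.End.mul_apply]
        using gen_mem 0 (c + 1)
    · rw [hM.Y_X_pow_succ_apply (hM.Y_pow_mem hv c), ← Module.End.mul_apply Y, ← pow_succ']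
      exact add_mem (gen_mem _ _) (smul_mem _ _ (gen_mem _ _))
  · refine stable H (fun a c => ?_) u hu
    rw [hM.H_apply _ _ (hM.X_pow_mem (hM.Y_pow_mem hv c) a)]
    exact smul_mem _ _ (gen_mem a c)

theorem le_map_Y_X_of_generated [CharZero K] (hM : IsSl2WeightFamily X Y H W) {k : ℕ}
    (htop : ∀ j : ℤ, (k : ℤ) < j → W j = ⊥) {v : M} (hv : v ∈ W (-k - 2))
    (hgen : ∀ N : Submodule K M, v ∈ N → (∀ u ∈ N, X u ∈ N ∧ Y u ∈ N ∧ H u ∈ N) → N = ⊤)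
    (d : ℕ) : W (-k - 2 - 2 * d) ≤ (W (-k - 2 - 2 * d)).map (Y ∘ₗ X) := by
  set j : ℤ := -k - 2 - 2 * d
  let g : ℕ → M := fun c => (X ^ (c + d)) ((Y ^ c) v)
  have hgW : ∀ c, g c ∈ W j := fun c => by
    convert hM.X_pow_mem (hM.Y_pow_mem hv c) (c + d) using 2
    push_cast
    ring
  have hWg : W j ≤ span K (Set.range g) := by
    rw [eq_span_image_of_iSupIndep hM.iSupIndep _ (fun p : ℕ × ℕ => -k - 2 + 2 * p.2 - 2 * p.1)
      (fun p => hM.X_pow_mem (hM.Y_pow_mem hv p.2) p.1) (hM.span_X_pow_Y_pow_eq_top hv hgen)]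
    refine span_mono ?_
    rintro _ ⟨⟨a, c⟩, hac, rfl⟩
    obtain rfl : a = c + d := by simp only [Set.mem_ofPred_eq] at hac; omega
    exact ⟨c, rfl⟩
  have hg : span K (Set.range g) ≤ (span K (Set.range g)).map (Y ∘ₗ X) := by
    refine le_map_of_triangular _ g
      (fun c => ((c + d : ℕ) + 1 : K) * (((-k - 2 + 2 * c : ℤ) : K) - (c + d : ℕ))) (N := k + 2)
      (fun c hc => ?_) (fun c _ => ?_) (fun c hc => ?_)
    · have : (Y ^ c) v = 0 := by
        simpa [htop _ (by omega : (k : ℤ) < -k - 2 + 2 * c)] using hM.Y_pow_mem hv c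
      simp [g, this]
    · simp only [g, LinearMap.comp_apply, ← Module.End.mul_apply X, ← pow_succ']
      rw [hM.Y_X_pow_succ_apply (hM.Y_pow_mem hv c), add_comm, ← Module.End.mul_apply Y,
        ← pow_succ', Nat.add_right_comm]
    · refine mul_ne_zero (Nat.cast_add_one_ne_zero _) (sub_ne_zero.mpr ?_)
      exact_mod_cast (by omega : (-k - 2 + 2 * c : ℤ) ≠ (c + d : ℕ))
  calc W j ≤ span K (Set.range g) := hWg
    _ ≤ (span K (Set.range g)).map (Y ∘ₗ X) := hg
    _ ≤ (W j).map (Y ∘ₗ X) := map_mono (span_le.mpr (by rintro _ ⟨c, rfl⟩; exact hgW c))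

end IsSl2WeightFamily

theorem stmt12_general (k : ℕ) (M : Type*) [AddCommGroup M] [Module ℂ M]
    (X Y H : Module.End ℂ M)
    (hYX : Y ∘ₗ X - X ∘ₗ Y = H)
    (W : ℤ → Submodule ℂ M)
    (hW : ∀ j : ℤ, ∀ w ∈ W j, H w = (j : ℂ) • w)
    (hXW : ∀ j : ℤ, ∀ w ∈ W j, X w ∈ W (j - 2))
    (hYW : ∀ j : ℤ, ∀ w ∈ W j, Y w ∈ W (j + 2))
    (htop : ∀ j : ℤ, (k : ℤ) < j → W j = ⊥)
    (hdim1 : ∀ j : ℤ, -(k : ℤ) ≤ j → j ≤ (k : ℤ) → 2 ∣ ((k : ℤ) - j) →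
      Module.finrank ℂ (W j) = 1)
    (hdim2 : ∀ j : ℤ, j ≤ -(k : ℤ) - 2 → 2 ∣ ((k : ℤ) - j) →
      Module.finrank ℂ (W j) = 2)
    (hcyc : ∃ v ∈ W (-(k : ℤ) - 2), ∀ N : Submodule ℂ M, v ∈ N →
      (∀ u ∈ N, X u ∈ N ∧ Y u ∈ N ∧ H u ∈ N) → N = ⊤) :
    (∀ j : ℤ, 2 ∣ ((k : ℤ) - j) → j ≤ (k : ℤ) → j ≠ -(k : ℤ) →
      (∀ w ∈ W j, Y (X w) = 0 → w = 0) ∧ (∀ u ∈ W j, ∃ w ∈ W j, Y (X w) = u)) ∧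
    (∀ w ∈ W (-(k : ℤ)), Y (X w) = 0) := by
  obtain ⟨v, hv, hgen⟩ := hcyc
  have hM : IsSl2WeightFamily X Y H W :=
    ⟨fun w => by simpa [sub_eq_iff_eq_add'] using LinearMap.congr_fun hYX w, hW, hXW, hYW⟩
  have hdim_top : ∀ a ≤ k, finrank ℂ (W (k - 2 * a)) = 1 := fun a ha =>
    hdim1 _ (by omega) (by omega) ⟨a, by ring⟩
  have hdim_k : finrank ℂ (W k) = 1 := hdim1 k (by omega) le_rfl ⟨0, by ring⟩
  obtain ⟨w₀, hw₀, hw₀0⟩ := exists_mem_ne_zero_of_ne_bot (p := W k) fun h => by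
    rw [h, finrank_bot] at hdim_k
    exact zero_ne_one hdim_k
  have hYw₀ : Y w₀ = 0 := by simpa [htop (k + 2) (by omega)] using hM.Y_mem k w₀ hw₀
  have hstrip : ∀ a ≤ k, ∀ w ∈ W (k - 2 * a), Y (X w) = (((a : ℂ) + 1) * (k - a)) • w :=
    fun a ha _ hw => hM.Y_X_eq_smul_of_finrank_eq_one hw₀ hYw₀ hw₀0 ha (hdim_top a ha) hw
  refine ⟨fun j ⟨d, hd⟩ hjk hjne => ?_, fun w hw => ?_⟩
  · rcases le_or_gt (-(k : ℤ)) j with hj | hj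
    · obtain ⟨a, rfl, hak⟩ : ∃ a : ℕ, j = k - 2 * a ∧ a < k := ⟨d.toNat, by omega, by omega⟩
      have := Module.finite_of_finrank_pos (hdim_top a hak.le).symm.le
      have hc : ((a : ℂ) + 1) * (k - a) ≠ 0 :=
        mul_ne_zero (Nat.cast_add_one_ne_zero a) (sub_ne_zero.mpr (by exact_mod_cast hak.ne'))
      exact injOn_and_surjOn_of_le_map (fun w => hM.Y_X_mem)
        (le_map_of_forall_eq_smul (T := Y ∘ₗ X) (hstrip a hak.le) hc)
    · obtain ⟨e, rfl⟩ : ∃ e : ℕ, j = -k - 2 - 2 * e := ⟨(d - k - 1).toNat, by omega⟩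
      have := Module.finite_of_finrank_pos (hdim2 _ (by omega) ⟨d, hd⟩ ▸ Nat.two_pos)
      exact injOn_and_surjOn_of_le_map (fun w => hM.Y_X_mem)
        (hM.le_map_Y_X_of_generated htop (by simpa using hv) hgen e)
  · simpa using hstrip k le_rfl w (by rwa [show (k : ℤ) - 2 * k = -k by ring])

/-- Let `M = P(k)` be the big projective module in the block
of category 𝒪 for sl₂(ℂ) containing `L(k)`, `k ≥ 0`, described structurally:
`M` carries commuting-data `X = L_ω` (lowering the `H`-weight by 2), `Y = Ω`
(raising it by 2) and `H`, forming an sl₂-triple; `M` is the direct sum of its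
`H`-weight spaces `W j`, which vanish above `k` and off the coset `k + 2ℤ`, are
one-dimensional for `-k ≤ j ≤ k` and two-dimensional for `j ≤ -k-2` (Verma flag
`M(k), M(-k-2)`), and `M` is generated by a vector of weight `-k-2`.
Then the composite `Ω L_ω = Y ∘ X` acting on the weight-`j` space `W j` is an
isomorphism for `j ≠ -k` and is zero for `j = -k`. -/
theorem stmt12 (k : ℕ) (M : Type*) [AddCommGroup M] [Module ℂ M]
    (X Y H : Module.End ℂ M)
    (hHX : H ∘ₗ X - X ∘ₗ H = -((2 : ℂ) • X))
    (hHY : H ∘ₗ Y - Y ∘ₗ H = (2 : ℂ) • Y)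
    (hYX : Y ∘ₗ X - X ∘ₗ Y = H)
    (W : ℤ → Submodule ℂ M)
    (hW : ∀ j : ℤ, ∀ w ∈ W j, H w = (j : ℂ) • w)
    (hXW : ∀ j : ℤ, ∀ w ∈ W j, X w ∈ W (j - 2))
    (hYW : ∀ j : ℤ, ∀ w ∈ W j, Y w ∈ W (j + 2))
    (hsup : ⨆ j, W j = ⊤)
    (htop : ∀ j : ℤ, (k : ℤ) < j → W j = ⊥)
    (hpar : ∀ j : ℤ, ¬ (2 ∣ ((k : ℤ) - j)) → W j = ⊥)
    (hdim1 : ∀ j : ℤ, -(k : ℤ) ≤ j → j ≤ (k : ℤ) → 2 ∣ ((k : ℤ) - j) →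
      Module.finrank ℂ (W j) = 1)
    (hdim2 : ∀ j : ℤ, j ≤ -(k : ℤ) - 2 → 2 ∣ ((k : ℤ) - j) →
      Module.finrank ℂ (W j) = 2)
    (hcyc : ∃ v ∈ W (-(k : ℤ) - 2), ∀ N : Submodule ℂ M, v ∈ N →
      (∀ u ∈ N, X u ∈ N ∧ Y u ∈ N ∧ H u ∈ N) → N = ⊤) :
    (∀ j : ℤ, 2 ∣ ((k : ℤ) - j) → j ≤ (k : ℤ) → j ≠ -(k : ℤ) →
      (∀ w ∈ W j, Y (X w) = 0 → w = 0) ∧ (∀ u ∈ W j, ∃ w ∈ W j, Y (X w) = u)) ∧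
    (∀ w ∈ W (-(k : ℤ)), Y (X w) = 0) :=
  stmt12_general k M X Y H hYX W hW hXW hYW htop hdim1 hdim2 hcyc
end
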